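/- Let G be a simple graph on [n] = {1,…,n} with connected components G₁, G₂, …, G_k (each G_i regarded as a connected graph on its own vertex set). Then the h-polynomials of the associated graphical building sets satisfy h_G(t) = (1 + t + ⋯ + t^{k−1}) · ∏_{i=1}^k h_{G_i}(t), as an identity of polynomials in ℤ[t]. -/

import Mathlib

open scoped Classical

noncomputable section

/-- A rooted tree on the vertex set `S ⊆ ℕ`, encoded by its root and its parent
function; edges are directed away from the root (so each non-root vertex `i`
carries the edge `(i, parent i)`, with `parent i` closer to the root).  The
parent function is normalized to be the identity outside `S` and at the root. -/
structure RTree (S : Finset ℕ) where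
  root : ℕ
  root_mem : root ∈ S
  parent : ℕ → ℕ
  parent_out : ∀ i, i ∉ S → parent i = i
  parent_root : parent root = root
  parent_mem : ∀ i ∈ S, parent i ∈ S
  reach : ∀ i ∈ S, ∃ k, parent^[k] i = root

namespace RTree

variable {S : Finset ℕ}

/-- The set `T_{≤ i}` of descendants of `i` in `T` (including `i` itself). -/
def desc (T : RTree S) (i : ℕ) : Finset ℕ :=
  S.filter fun j => ∃ k, T.parent^[k] j = i

/-- The depth of a vertex: its distance to the root. -/
def dp (T : RTree S) (x : ℕ) : ℕ :=
  sInf {k | T.parent^[k] x = T.root}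

/-- The depth of the tree: the maximal depth of a vertex. -/
def depth (T : RTree S) : ℕ := S.sup T.dp

/-- The set of descent edges `(i, parent i)` with `i > parent i`, recorded by
the child endpoint `i`. -/
def desSet (T : RTree S) : Finset ℕ :=
  S.filter fun i => i ≠ T.root ∧ T.parent i < i

/-- The number of descents of `T`. -/
def des (T : RTree S) : ℕ := T.desSet.card

/-- The major index of `T`: the sum, over all descent edges `(i,j)` of `T`
(with `j = parent i`), of `depth T - dp j`, i.e. of the minimal rank of `j`. -/
def maj (T : RTree S) : ℕ :=
  ∑ i ∈ T.desSet, (T.depth - T.dp (T.parent i))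

/-- The statistic `μ(T)`: the sum, over all edges `(i,j)` of `T`
(with `j = parent i`), of `depth T - dp j`. -/
def mu (T : RTree S) : ℕ :=
  ∑ i ∈ S.filter (fun i => i ≠ T.root), (T.depth - T.dp (T.parent i))

end RTree

/-- `B` is a building set on the finite ground set `S`. -/
def IsBuildingSet (S : Finset ℕ) (B : Finset (Finset ℕ)) : Prop :=
  (∀ I ∈ B, I ⊆ S ∧ I.Nonempty) ∧
  (∀ I ∈ B, ∀ J ∈ B, (I ∩ J).Nonempty → I ∪ J ∈ B) ∧
  (∀ i ∈ S, ({i} : Finset ℕ) ∈ B)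

/-- `B` is a connected building set on `S`. -/
def IsConnBuildingSet (S : Finset ℕ) (B : Finset (Finset ℕ)) : Prop :=
  IsBuildingSet S B ∧ S ∈ B

/-- `T` is a `B`-tree: all descendant sets belong to `B`, and no union of
descendant sets of `k ≥ 2` pairwise incomparable nodes belongs to `B`. -/
def IsBTree (S : Finset ℕ) (B : Finset (Finset ℕ)) (T : RTree S) : Prop :=
  (∀ i ∈ S, T.desc i ∈ B) ∧
  ∀ I : Finset ℕ, I ⊆ S → 2 ≤ I.card →
    (∀ i ∈ I, ∀ j ∈ I, i ≠ j → i ∉ T.desc j ∧ j ∉ T.desc i) →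
    I.biUnion T.desc ∉ B

/-- The connected graphical building set `B̂(G)` of a simple graph `G` on the
finite vertex set `V`: all nonempty subsets inducing a connected subgraph,
together with `V` itself. -/
def hatB (G : SimpleGraph ℕ) (V : Finset ℕ) : Finset (Finset ℕ) :=
  (V.powerset.filter fun J =>
    J.Nonempty ∧ (G.induce (J : Set ℕ)).Connected) ∪ {V}

/-!
In a `B̂(G)`-tree `T`, every component `Vᵢ` not containing the root hangs as a whole below a
single child of the root: the subtrees of the children of the root lying in `Vᵢ` cover `Vᵢ`,
which is connected, so the second `B`-tree axiom allows only one of them. Cutting the edges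
from these children to the root leaves `B̂(Gᵢ)`-trees on the components. Conversely, given
`B̂(Gᵢ)`-trees `Tᵢ` and a component `c`, hanging the roots of all `Tᵢ`, `i ≠ c`, below the root
of `T_c` gives a `B̂(G)`-tree, and the two constructions are inverse. The new edges add one
descent for every `i` with `root Tᵢ > root T_c`; as `c` runs over the components, this number
runs over `0, …, k - 1`, which produces the factor `1 + t + ⋯ + t^(k-1)`.
-/

open Finset

namespace RTree

variable {S : Finset ℕ}

@[ext] lemma ext {T T' : RTree S} (hroot : T.root = T'.root) (hparent : T.parent = T'.parent) :
    T = T' := by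
  cases T; cases T'; simp_all

instance : Finite (RTree S) := by
  refine Finite.of_injective (β := S × (S → S))
    (fun T => (⟨T.root, T.root_mem⟩, fun v => ⟨T.parent v, T.parent_mem v v.2⟩)) ?_
  intro T T' h
  simp only [Prod.mk.injEq, Subtype.mk.injEq] at h
  refine ext h.1 (funext fun v => ?_)
  by_cases hv : v ∈ S
  · exact congrArg Subtype.val (congrFun h.2 ⟨v, hv⟩)
  · rw [T.parent_out v hv, T'.parent_out v hv]

instance : Fintype (RTree S) := Fintype.ofFinite _

variable {T : RTree S} {u v w : ℕ}

lemma mem_desc : w ∈ T.desc v ↔ w ∈ S ∧ ∃ m, T.parent^[m] w = v := by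
  simp [desc]

lemma desc_subset (T : RTree S) (v : ℕ) : T.desc v ⊆ S := filter_subset _ _

lemma mem_desc_self (hv : v ∈ S) : v ∈ T.desc v := mem_desc.2 ⟨hv, 0, rfl⟩

lemma mem_desc_parent (hv : v ∈ S) : v ∈ T.desc (T.parent v) := mem_desc.2 ⟨hv, 1, rfl⟩

lemma mem_desc_trans (huv : u ∈ T.desc v) (hvw : v ∈ T.desc w) : u ∈ T.desc w := by
  obtain ⟨hu, a, ha⟩ := mem_desc.1 huv
  obtain ⟨-, b, hb⟩ := mem_desc.1 hvw
  exact mem_desc.2 ⟨hu, b + a, by rw [Function.iterate_add_apply, ha, hb]⟩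

lemma parent_mem_desc (hw : w ∈ T.desc v) (hwv : w ≠ v) : T.parent w ∈ T.desc v := by
  obtain ⟨hwS, _ | m, hm⟩ := mem_desc.1 hw
  · exact absurd hm hwv
  · exact mem_desc.2 ⟨T.parent_mem w hwS, m, hm⟩

lemma desc_root (T : RTree S) : T.desc T.root = S :=
  (desc_subset T _).antisymm fun v hv => mem_desc.2 ⟨hv, T.reach v hv⟩

lemma eq_root_of_root_mem_desc (h : T.root ∈ T.desc v) : v = T.root := by
  obtain ⟨-, m, hm⟩ := mem_desc.1 h
  rwa [Function.iterate_fixed T.parent_root, eq_comm] at hm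

lemma parent_ne_self (hv : v ∈ S) (hvr : v ≠ T.root) : T.parent v ≠ v := by
  intro h
  obtain ⟨m, hm⟩ := T.reach v hv
  rw [Function.iterate_fixed h] at hm
  exact hvr hm

lemma desc_induction {P : ℕ → Prop} (base : P v)
    (step : ∀ w ∈ T.desc v, w ≠ v → P (T.parent w) → P w) : ∀ w ∈ T.desc v, P w := by
  intro w hw
  obtain ⟨hwS, m, hm⟩ := mem_desc.1 hw
  induction m generalizing w with
  | zero => obtain rfl : w = v := hm; exact base
  | succ m ih =>
    by_cases hwv : w = v
    · exact hwv ▸ base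
    · exact step w hw hwv (ih _ (parent_mem_desc hw hwv) (T.parent_mem w hwS) hm)

lemma desc_antisymm (huv : u ∈ T.desc v) (hvu : v ∈ T.desc u) : u = v := by
  suffices ∀ u ∈ T.desc T.root, ∀ v, u ∈ T.desc v → v ∈ T.desc u → u = v from
    this u (by rw [desc_root]; exact desc_subset T v huv) v huv hvu
  refine desc_induction (fun v hv _ => (eq_root_of_root_mem_desc hv).symm) ?_
  intro u _ _ ih v huv hvu
  by_contra huv'
  -- antisymmetry at the parent of `u` forces that parent to equal both `v` and `u`
  have hpv : T.parent u = v := ih v (parent_mem_desc huv huv')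
    (mem_desc_trans hvu (mem_desc_parent (desc_subset T v huv)))
  have hpu : T.parent u = u := ih u (hpv ▸ hvu) (mem_desc_parent (desc_subset T v huv))
  exact huv' (hpu.symm.trans hpv)

lemma exists_parent_eq_root (hw : w ∈ S) (hwr : w ≠ T.root) :
    ∃ v ∈ S, v ≠ T.root ∧ T.parent v = T.root ∧ w ∈ T.desc v := by
  revert hwr
  refine desc_induction (P := fun w => w ≠ T.root → ∃ v ∈ S, v ≠ T.root ∧
    T.parent v = T.root ∧ w ∈ T.desc v) (fun h => absurd rfl h) ?_ w (by rwa [desc_root])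
  intro w hw hwr ih _
  have hwS := desc_subset T _ hw
  by_cases hp : T.parent w = T.root
  · exact ⟨w, hwS, hwr, hp, mem_desc_self hwS⟩
  · obtain ⟨v, hvS, hvr, hpv, hwv⟩ := ih hp
    exact ⟨v, hvS, hvr, hpv, mem_desc_trans (mem_desc_parent hwS) hwv⟩

lemma root_notMem_of_incomparable {I : Finset ℕ} (hIS : I ⊆ S) (hI : 2 ≤ #I)
    (hinc : ∀ i ∈ I, ∀ j ∈ I, i ≠ j → i ∉ T.desc j ∧ j ∉ T.desc i) : T.root ∉ I := by
  intro hr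
  obtain ⟨j, hj, hjr⟩ := exists_mem_ne hI T.root
  exact (hinc j hj _ hr hjr).1 (by rw [desc_root]; exact hIS hj)

section Restrict

variable {W : Finset ℕ} {r : ℕ}

def restrict (T : RTree S) (W : Finset ℕ) (r : ℕ) (hr : r ∈ W) (hW : W ⊆ T.desc r)
    (hparent : ∀ v ∈ W, v ≠ r → T.parent v ∈ W) : RTree W where
  root := r
  root_mem := hr
  parent v := if v ∈ W ∧ v ≠ r then T.parent v else v
  parent_out _ hv := if_neg fun h => hv h.1
  parent_root := if_neg fun h => h.2 rfl
  parent_mem v hv := by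
    by_cases hvr : v = r
    · rwa [if_neg fun h => h.2 hvr]
    · rw [if_pos ⟨hv, hvr⟩]; exact hparent v hv hvr
  reach w hw := by
    refine desc_induction (P := fun w => w ∈ W →
      ∃ m, (fun v => if v ∈ W ∧ v ≠ r then T.parent v else v)^[m] w = r)
      (fun _ => ⟨0, rfl⟩) ?_ w (hW hw) hw
    intro w _ hwr ih hwW
    obtain ⟨m, hm⟩ := ih (hparent w hwW hwr)
    exact ⟨m + 1, by rwa [Function.iterate_succ_apply, if_pos ⟨hwW, hwr⟩]⟩

variable (hr : r ∈ W) (hW : W ⊆ T.desc r) (hparent : ∀ v ∈ W, v ≠ r → T.parent v ∈ W)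

lemma restrict_parent (hv : v ∈ W) (hvr : v ≠ r) :
    (T.restrict W r hr hW hparent).parent v = T.parent v :=
  if_pos ⟨hv, hvr⟩

lemma restrict_desc (hv : v ∈ W) (hvr : v ≠ r) :
    (T.restrict W r hr hW hparent).desc v = T.desc v ∩ W := by
  have hrv : r ∉ T.desc v := fun h => hvr (desc_antisymm (hW hv) h)
  ext w
  rw [mem_inter]
  constructor
  · intro hw
    refine ⟨?_, desc_subset _ _ hw⟩
    revert hw
    refine desc_induction (P := fun w => w ∈ T.desc v)
      (mem_desc_self (desc_subset T r (hW hv))) ?_ w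
    intro w hw _ ih
    have hwr : w ≠ r := fun h => hvr (eq_root_of_root_mem_desc (h ▸ hw))
    rw [restrict_parent hr hW hparent (desc_subset _ _ hw) hwr] at ih
    exact mem_desc_trans (mem_desc_parent (desc_subset T r (hW (desc_subset _ _ hw)))) ih
  · rintro ⟨hw, hwW⟩
    revert hwW
    refine desc_induction (P := fun w => w ∈ W → w ∈ (T.restrict W r hr hW hparent).desc v)
      (fun _ => mem_desc_self hv) ?_ w hw
    intro w hw _ ih hwW
    have hwr : w ≠ r := fun h => hrv (h ▸ hw)
    have hwp := mem_desc_parent (T := T.restrict W r hr hW hparent) hwW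
    rw [restrict_parent hr hW hparent hwW hwr] at hwp
    exact mem_desc_trans hwp (ih (hparent w hwW hwr))

end Restrict

end RTree

lemma IsBTree.biUnion_desc_notMem {S S' : Finset ℕ} {B : Finset (Finset ℕ)} {T : RTree S}
    (hT : IsBTree S B T) {T' : RTree S'} {I : Finset ℕ} (hIS : I ⊆ S) (hI : 2 ≤ #I)
    (hinc : ∀ i ∈ I, ∀ j ∈ I, i ≠ j → i ∉ T'.desc j ∧ j ∉ T'.desc i)
    (hdesc : ∀ a ∈ I, T'.desc a = T.desc a) : I.biUnion T'.desc ∉ B := by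
  rw [biUnion_congr rfl hdesc]
  exact hT.2 I hIS hI fun i hi j hj hij => hdesc i hi ▸ hdesc j hj ▸ hinc i hi j hj hij

lemma mem_hatB {G : SimpleGraph ℕ} {W J : Finset ℕ} :
    J ∈ hatB G W ↔ (J ⊆ W ∧ J.Nonempty ∧ (G.induce (J : Set ℕ)).Connected) ∨ J = W := by
  simp only [hatB, mem_union, mem_filter, mem_powerset, mem_singleton]

lemma subset_of_mem_hatB {G : SimpleGraph ℕ} {W J : Finset ℕ} (hJ : J ∈ hatB G W) : J ⊆ W := by
  rcases mem_hatB.1 hJ with h | rfl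
  exacts [h.1, subset_rfl]

lemma SimpleGraph.Connected.induce_subset {α : Type*} {G : SimpleGraph α} {U W : Set α}
    (hU : (G.induce U).Connected) (hW : ∀ x ∈ W, ∀ y ∈ U, G.Adj x y → y ∈ W) {x : α}
    (hxU : x ∈ U) (hxW : x ∈ W) : U ⊆ W := by
  intro y hyU
  obtain ⟨p⟩ := hU.preconnected ⟨x, hxU⟩ ⟨y, hyU⟩
  suffices ∀ {a b : U}, (G.induce U).Walk a b → (a : α) ∈ W → (b : α) ∈ W from this p hxW
  intro a b p
  induction p with
  | nil => exact id
  | cons h _ ih => exact fun ha => ih (hW _ ha _ (Subtype.prop _) h)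

lemma Finset.sum_pow_card_filter_lt {ι α R : Type*} [DecidableEq ι] [LinearOrder α] [Semiring R]
    {f : ι → α} (hf : Function.Injective f) (a : R) (s : Finset ι) :
    ∑ i ∈ s, a ^ #{j ∈ s | f i < f j} = ∑ m ∈ range #s, a ^ m := by
  induction s using Finset.induction_on_max_value f with
  | empty => simp
  | insert b s hb hmax ih =>
    have hb0 : #{j ∈ insert b s | f b < f j} = 0 := by
      refine card_eq_zero.2 (filter_eq_empty_iff.2 fun j hj => ?_)
      rcases mem_insert.1 hj with rfl | hj
      exacts [lt_irrefl _, not_lt.2 (hmax j hj)]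
    have hs : ∀ i ∈ s, #{j ∈ insert b s | f i < f j} = #{j ∈ s | f i < f j} + 1 := by
      intro i hi
      have hlt : f i < f b := (hmax i hi).lt_of_ne (hf.ne (ne_of_mem_of_not_mem hi hb))
      rw [filter_insert, if_pos hlt, card_insert_of_notMem fun h => hb (mem_filter.1 h).1]
    rw [sum_insert hb, hb0, card_insert_of_notMem hb, sum_range_succ', sum_congr rfl
      fun i hi => by rw [hs i hi, pow_succ], ← sum_mul, ih, sum_mul, add_comm]
    simp only [pow_succ]

open Polynomial

def hPoly (S : Finset ℕ) (B : Finset (Finset ℕ)) : ℤ[X] :=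
  ∑ᶠ T ∈ {T : RTree S | IsBTree S B T}, X ^ T.des

lemma hPoly_eq_sum (S : Finset ℕ) (B : Finset (Finset ℕ)) :
    hPoly S B = ∑ T : {T : RTree S | IsBTree S B T}, X ^ T.1.des := by
  rw [hPoly, ← finsum_set_coe_eq_finsum_mem, finsum_eq_sum_of_fintype]

structure IsComponentPartition (G : SimpleGraph ℕ) (S : Finset ℕ) {k : ℕ}
    (V : Fin k → Finset ℕ) : Prop where
  disjoint : ∀ i j, i ≠ j → Disjoint (V i) (V j)
  biUnion_eq : univ.biUnion V = S
  connected : ∀ i, (G.induce (V i : Set ℕ)).Connected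
  not_adj : ∀ i j, i ≠ j → ∀ x ∈ V i, ∀ y ∈ V j, ¬ G.Adj x y

def glueParent {k : ℕ} {V : Fin k → Finset ℕ} (c : Fin k) (g : ∀ i, RTree (V i))
    (v : ℕ) : ℕ :=
  if h : ∃ i, v ∈ V i then
    if v = (g h.choose).root then (g c).root else (g h.choose).parent v
  else v

namespace IsComponentPartition

section Basic

variable {G : SimpleGraph ℕ} {S : Finset ℕ} {k : ℕ} {V : Fin k → Finset ℕ}
  (hV : IsComponentPartition G S V) {i j : Fin k} {v : ℕ}
include hV

lemma subset (i : Fin k) : V i ⊆ S :=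
  hV.biUnion_eq ▸ subset_biUnion_of_mem V (mem_univ i)

lemma exists_mem (hv : v ∈ S) : ∃ i, v ∈ V i := by
  rw [← hV.biUnion_eq] at hv
  simpa using hv

lemma eq_of_mem (hi : v ∈ V i) (hj : v ∈ V j) : i = j := by
  by_contra hij
  exact disjoint_left.1 (hV.disjoint i j hij) hi hj

lemma nonempty (i : Fin k) : (V i).Nonempty := by
  obtain ⟨⟨x, hx⟩⟩ := (hV.connected i).nonempty
  exact ⟨x, hx⟩

lemma subset_of_connected {J : Finset ℕ} (hJS : J ⊆ S)
    (hJ : (G.induce (J : Set ℕ)).Connected) (hvJ : v ∈ J) (hvi : v ∈ V i) : J ⊆ V i := by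
  refine fun y hy => hJ.induce_subset (W := V i) ?_ hvJ hvi hy
  intro x hx y hy hxy
  obtain ⟨j, hj⟩ := hV.exists_mem (hJS hy)
  obtain rfl : i = j := by_contra fun hij => hV.not_adj i j hij x hx y hj hxy
  exact hj

lemma mem_hatB_of_mem_hatB_component {J : Finset ℕ} (hJ : J ∈ hatB G (V i)) :
    J ∈ hatB G S := by
  refine mem_hatB.2 (Or.inl ?_)
  rcases mem_hatB.1 hJ with h | rfl
  · exact ⟨h.1.trans (hV.subset i), h.2⟩
  · exact ⟨hV.subset i, hV.nonempty i, hV.connected i⟩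

lemma mem_hatB_component {J : Finset ℕ} (hJ : J ∈ hatB G S) (hJS : J ≠ S) (hvJ : v ∈ J)
    (hvi : v ∈ V i) : J ∈ hatB G (V i) := by
  obtain ⟨hJS', hJne, hJc⟩ := (mem_hatB.1 hJ).resolve_right hJS
  exact mem_hatB.2 (Or.inl ⟨hV.subset_of_connected hJS' hJc hvJ hvi, hJne, hJc⟩)

end Basic

open RTree

section Split

variable {G : SimpleGraph ℕ} {S : Finset ℕ} {k : ℕ} {V : Fin k → Finset ℕ}
  (hV : IsComponentPartition G S V) {T : RTree S} (hT : IsBTree S (hatB G S) T)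
  {i : Fin k} {r v : ℕ}
include hV hT

lemma desc_mem_hatB_component (hvi : v ∈ V i) (hvr : v ≠ T.root) :
    T.desc v ∈ hatB G (V i) :=
  hV.mem_hatB_component (hT.1 v (hV.subset i hvi))
    (fun h => hvr (eq_root_of_root_mem_desc (by rw [h]; exact T.root_mem)))
    (mem_desc_self (hV.subset i hvi)) hvi

lemma desc_subset_component (hvi : v ∈ V i) (hvr : v ≠ T.root) : T.desc v ⊆ V i :=
  subset_of_mem_hatB (hV.desc_mem_hatB_component hT hvi hvr)

lemma parent_mem_component (hvi : v ∈ V i) (hp : T.parent v ≠ T.root) :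
    T.parent v ∈ V i := by
  obtain ⟨j, hj⟩ := hV.exists_mem (T.parent_mem v (hV.subset i hvi))
  obtain rfl := hV.eq_of_mem hvi
    (hV.desc_subset_component hT hj hp (mem_desc_parent (hV.subset i hvi)))
  exact hj

lemma exists_subset_desc (i : Fin k) : ∃ r ∈ V i, V i ⊆ T.desc r := by
  by_cases hri : T.root ∈ V i
  · exact ⟨T.root, hri, by rw [desc_root]; exact hV.subset i⟩
  set M := (V i).filter fun v => T.parent v = T.root
  have hcover : ∀ w ∈ V i, ∃ v ∈ M, w ∈ T.desc v := by
    intro w hw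
    obtain ⟨v, hvS, hvr, hpv, hwv⟩ :=
      T.exists_parent_eq_root (hV.subset i hw) fun h => hri (h ▸ hw)
    obtain ⟨j, hj⟩ := hV.exists_mem hvS
    obtain rfl := hV.eq_of_mem hw (hV.desc_subset_component hT hj hvr hwv)
    exact ⟨v, mem_filter.2 ⟨hj, hpv⟩, hwv⟩
  -- `V i` is the union of the subtrees of the children of the root lying in it, so the
  -- second axiom of a `B`-tree leaves room for only one such child
  have hM : #M ≤ 1 := by
    by_contra! hM
    have hnotMem : ∀ a ∈ M, ∀ b ∈ M, a ≠ b → a ∉ T.desc b := by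
      intro a ha b hb hab h
      have hrb := (mem_filter.1 ha).2 ▸ parent_mem_desc h hab
      exact hri (eq_root_of_root_mem_desc hrb ▸ (mem_filter.1 hb).1)
    have hunion : M.biUnion T.desc = V i :=
      (biUnion_subset.2 fun v hv => hV.desc_subset_component hT (mem_filter.1 hv).1
        fun h => hri (h ▸ (mem_filter.1 hv).1)).antisymm
        fun w hw => mem_biUnion.2 (hcover w hw)
    refine hT.2 M ((filter_subset _ _).trans (hV.subset i)) hM
      (fun a ha b hb hab => ⟨hnotMem a ha b hb hab, hnotMem b hb a ha hab.symm⟩) ?_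
    rw [hunion]
    exact hV.mem_hatB_of_mem_hatB_component (mem_hatB.2 (Or.inr rfl))
  obtain ⟨w, hw⟩ := hV.nonempty i
  obtain ⟨r, hrM, -⟩ := hcover w hw
  refine ⟨r, (mem_filter.1 hrM).1, fun w hw => ?_⟩
  obtain ⟨v, hvM, hwv⟩ := hcover w hw
  rwa [card_le_one.1 hM r hrM v hvM]

/-- The root of the part of `T` on the component `V i`: either the root of `T`, or the child
of the root whose subtree is `V i`. -/
def top (i : Fin k) : ℕ := (hV.exists_subset_desc hT i).choose

lemma top_mem : hV.top hT i ∈ V i := (hV.exists_subset_desc hT i).choose_spec.1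

lemma subset_desc_top : V i ⊆ T.desc (hV.top hT i) :=
  (hV.exists_subset_desc hT i).choose_spec.2

lemma top_eq (hr : r ∈ V i) (h : V i ⊆ T.desc r) : hV.top hT i = r :=
  desc_antisymm (h (hV.top_mem hT)) (hV.subset_desc_top hT hr)

lemma top_eq_root (h : T.root ∈ V i) : hV.top hT i = T.root :=
  hV.top_eq hT h (by rw [desc_root]; exact hV.subset i)

lemma ne_root_of_ne_top (hvi : v ∈ V i) (hv : v ≠ hV.top hT i) : v ≠ T.root :=
  fun h => hv (h ▸ (hV.top_eq_root hT (h ▸ hvi)).symm)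

lemma parent_mem_component_of_ne_top (hvi : v ∈ V i) (hv : v ≠ hV.top hT i) :
    T.parent v ∈ V i := by
  by_cases hp : T.parent v = T.root
  · have hr := parent_mem_desc (hV.subset_desc_top hT hvi) hv
    rw [hp] at hr ⊢
    exact eq_root_of_root_mem_desc hr ▸ hV.top_mem hT
  · exact hV.parent_mem_component hT hvi hp

lemma parent_top (hi : T.root ∉ V i) : T.parent (hV.top hT i) = T.root := by
  by_contra hp
  have hpt := desc_antisymm
    (hV.subset_desc_top hT (hV.parent_mem_component hT (hV.top_mem hT) hp))
    (mem_desc_parent (hV.subset i (hV.top_mem hT)))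
  exact parent_ne_self (hV.subset i (hV.top_mem hT)) (fun h => hi (h ▸ hV.top_mem hT)) hpt

def split (i : Fin k) : RTree (V i) :=
  T.restrict (V i) (hV.top hT i) (hV.top_mem hT) (hV.subset_desc_top hT)
    fun _ hv hvt => hV.parent_mem_component_of_ne_top hT hv hvt

lemma split_root : (hV.split hT i).root = hV.top hT i := rfl

lemma split_parent (hvi : v ∈ V i) (hv : v ≠ hV.top hT i) :
    (hV.split hT i).parent v = T.parent v :=
  restrict_parent _ _ _ hvi hv

lemma split_desc (hvi : v ∈ V i) (hv : v ≠ hV.top hT i) :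
    (hV.split hT i).desc v = T.desc v := by
  rw [split, restrict_desc _ _ _ hvi hv,
    inter_eq_left.2 (hV.desc_subset_component hT hvi (hV.ne_root_of_ne_top hT hvi hv))]

lemma split_isBTree (i : Fin k) : IsBTree (V i) (hatB G (V i)) (hV.split hT i) := by
  constructor
  · intro v hv
    by_cases hvt : v = hV.top hT i
    · rw [hvt, ← split_root, desc_root]
      exact mem_hatB.2 (Or.inr rfl)
    · rw [hV.split_desc hT hv hvt]
      exact hV.desc_mem_hatB_component hT hv (hV.ne_root_of_ne_top hT hv hvt)
  · intro I hIS hI hinc hmem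
    have htI := root_notMem_of_incomparable hIS hI hinc
    exact hT.biUnion_desc_notMem (hIS.trans (hV.subset i)) hI hinc
      (fun a ha => hV.split_desc hT (hIS ha) (ne_of_mem_of_not_mem ha htI))
      (hV.mem_hatB_of_mem_hatB_component hmem)

end Split

section Glue

variable {G : SimpleGraph ℕ} {S : Finset ℕ} {k : ℕ} {V : Fin k → Finset ℕ}
  (hV : IsComponentPartition G S V) (c : Fin k) (g : ∀ i, RTree (V i)) {i : Fin k} {v : ℕ}
include hV

lemma glueParent_of_mem (hvi : v ∈ V i) :
    glueParent c g v = if v = (g i).root then (g c).root else (g i).parent v := by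
  have h : ∃ j, v ∈ V j := ⟨i, hvi⟩
  rw [glueParent, dif_pos h, hV.eq_of_mem h.choose_spec hvi]

def glue : RTree S where
  root := (g c).root
  root_mem := hV.subset c (g c).root_mem
  parent := glueParent c g
  parent_out _ hv := dif_neg fun ⟨i, hi⟩ => hv (hV.subset i hi)
  parent_root := by rw [hV.glueParent_of_mem c g (g c).root_mem, if_pos rfl]
  parent_mem v hv := by
    obtain ⟨i, hi⟩ := hV.exists_mem hv
    rw [hV.glueParent_of_mem c g hi]
    split_ifs
    exacts [hV.subset c (g c).root_mem, hV.subset i ((g i).parent_mem v hi)]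
  reach w hw := by
    obtain ⟨i, hi⟩ := hV.exists_mem hw
    refine desc_induction (P := fun w => ∃ m, (glueParent c g)^[m] w = (g c).root)
      ⟨1, by rw [Function.iterate_one, hV.glueParent_of_mem c g (g i).root_mem, if_pos rfl]⟩
      ?_ w (by rwa [desc_root])
    intro w hw hwr ⟨m, hm⟩
    refine ⟨m + 1, ?_⟩
    rwa [Function.iterate_succ_apply, hV.glueParent_of_mem c g (desc_subset _ _ hw),
      if_neg hwr]

lemma glue_root : (hV.glue c g).root = (g c).root := rfl

lemma glue_parent_root (i : Fin k) : (hV.glue c g).parent (g i).root = (g c).root :=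
  (hV.glueParent_of_mem c g (g i).root_mem).trans (if_pos rfl)

lemma glue_parent (hvi : v ∈ V i) (hv : v ≠ (g i).root) :
    (hV.glue c g).parent v = (g i).parent v :=
  (hV.glueParent_of_mem c g hvi).trans (if_neg hv)

lemma glue_desc (hvi : v ∈ V i) (hv : v ≠ (g c).root) :
    (hV.glue c g).desc v = (g i).desc v := by
  ext w
  constructor
  · refine desc_induction (P := fun w => w ∈ (g i).desc v) (mem_desc_self hvi) ?_ w
    intro w hw _ ih
    obtain ⟨j, hwj⟩ := hV.exists_mem (desc_subset _ _ hw)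
    by_cases hwr : w = (g j).root
    · rw [hwr, glue_parent_root] at ih
      obtain rfl := hV.eq_of_mem (desc_subset _ _ ih) (g c).root_mem
      exact absurd (eq_root_of_root_mem_desc ih) hv
    · rw [hV.glue_parent c g hwj hwr] at ih
      obtain rfl := hV.eq_of_mem ((g j).parent_mem w hwj) (desc_subset _ _ ih)
      exact mem_desc_trans (mem_desc_parent hwj) ih
  · refine desc_induction (P := fun w => w ∈ (hV.glue c g).desc v)
      (mem_desc_self (hV.subset i hvi)) ?_ w
    intro w hw hwv ih
    have hwr : w ≠ (g i).root := fun h => hwv (h.trans (eq_root_of_root_mem_desc (h ▸ hw)).symm)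
    have hwp := mem_desc_parent (T := hV.glue c g) (hV.subset i (desc_subset _ _ hw))
    rw [hV.glue_parent c g (desc_subset _ _ hw) hwr] at hwp
    exact mem_desc_trans hwp ih

lemma root_injective : Function.Injective fun i => (g i).root :=
  fun i j h => hV.eq_of_mem (g i).root_mem (by simpa only [h] using (g j).root_mem)

lemma glue_isBTree (hg : ∀ i, IsBTree (V i) (hatB G (V i)) (g i)) :
    IsBTree S (hatB G S) (hV.glue c g) := by
  constructor
  · intro v hv
    by_cases hvr : v = (g c).root
    · rw [hvr, ← hV.glue_root c g, desc_root]
      exact mem_hatB.2 (Or.inr rfl)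
    · obtain ⟨i, hi⟩ := hV.exists_mem hv
      rw [hV.glue_desc c g hi hvr]
      exact hV.mem_hatB_of_mem_hatB_component ((hg i).1 v hi)
  · intro I hIS hI hinc hmem
    have hrI := root_notMem_of_incomparable hIS hI hinc
    have hrU : (g c).root ∉ I.biUnion (hV.glue c g).desc := by
      simp only [mem_biUnion, not_exists, not_and]
      exact fun a ha h => hrI (eq_root_of_root_mem_desc h ▸ ha)
    obtain ⟨a, ha⟩ := card_pos.1 (by omega : 0 < #I)
    have haU := mem_biUnion.2 ⟨a, ha, mem_desc_self (T := hV.glue c g) (hIS ha)⟩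
    obtain ⟨j, hj⟩ := hV.exists_mem (hIS ha)
    have hU := hV.mem_hatB_component hmem
      (fun h => hrU (by rw [h]; exact (hV.glue c g).root_mem)) haU hj
    have hIj : I ⊆ V j := fun b hb =>
      subset_of_mem_hatB hU (mem_biUnion.2 ⟨b, hb, mem_desc_self (hIS hb)⟩)
    exact (hg j).biUnion_desc_notMem hIj hI hinc
      (fun b hb => hV.glue_desc c g (hIj hb) (ne_of_mem_of_not_mem hb hrI)) hU

lemma split_glue (hB : IsBTree S (hatB G S) (hV.glue c g)) (i : Fin k) :
    hV.split hB i = g i := by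
  have htop : hV.top hB i = (g i).root := by
    refine hV.top_eq hB (g i).root_mem fun w hw => ?_
    by_cases hic : i = c
    · subst hic
      rw [← hV.glue_root i g, desc_root]
      exact hV.subset i hw
    · have hne : (g i).root ≠ (g c).root := fun h => hic (hV.root_injective g h)
      rwa [hV.glue_desc c g (g i).root_mem hne, desc_root]
  ext v
  · exact htop
  · by_cases hvi : v ∈ V i
    · by_cases hvr : v = (g i).root
      · have hsplit := (hV.split hB i).parent_root
        rw [split_root, htop] at hsplit
        rw [hvr, hsplit, (g i).parent_root]
      · rw [hV.split_parent hB hvi (htop ▸ hvr), hV.glue_parent c g hvi hvr]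
    · rw [(hV.split hB i).parent_out v hvi, (g i).parent_out v hvi]

omit g in
lemma glue_split {T : RTree S} (hT : IsBTree S (hatB G S) T) (hc : T.root ∈ V c) :
    hV.glue c (hV.split hT) = T := by
  have hroot : hV.top hT c = T.root := hV.top_eq_root hT hc
  ext v
  · exact hroot
  · by_cases hv : v ∈ S
    · obtain ⟨i, hi⟩ := hV.exists_mem hv
      by_cases hvt : v = hV.top hT i
      · rw [hvt]
        refine (hV.glue_parent_root c (hV.split hT) i).trans ?_
        by_cases hri : T.root ∈ V i
        · obtain rfl := hV.eq_of_mem hri hc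
          rw [split_root, hroot, T.parent_root]
        · rw [split_root, hroot, hV.parent_top hT hri]
      · rw [hV.glue_parent c _ hi hvt, hV.split_parent hT hi hvt]
    · rw [(hV.glue c _).parent_out v hv, T.parent_out v hv]

lemma desSet_glue : (hV.glue c g).desSet = univ.biUnion (fun i => (g i).desSet) ∪
    ({j | (g c).root < (g j).root} : Finset (Fin k)).image (fun j => (g j).root) := by
  ext v
  simp only [desSet, mem_union, mem_biUnion, mem_univ, true_and, mem_image, mem_filter]
  by_cases hv : v ∈ S
  · obtain ⟨i, hi⟩ := hV.exists_mem hv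
    by_cases hvr : v = (g i).root
    · subst hvr
      rw [glue_parent_root, glue_root]
      constructor
      · rintro ⟨-, -, hlt⟩
        exact Or.inr ⟨i, hlt, rfl⟩
      · rintro (⟨j, hj, hjr, -⟩ | ⟨j, hlt, hj⟩)
        · obtain rfl := hV.eq_of_mem hi hj
          exact absurd rfl hjr
        · obtain rfl := hV.root_injective g hj
          exact ⟨hv, hlt.ne', hlt⟩
    · rw [hV.glue_parent c g hi hvr, glue_root]
      have hvc : v ≠ (g c).root := by
        rintro rfl
        obtain rfl := hV.eq_of_mem hi (g c).root_mem
        exact hvr rfl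
      constructor
      · rintro ⟨-, -, hlt⟩
        exact Or.inl ⟨i, hi, hvr, hlt⟩
      · rintro (⟨j, hj, -, hlt⟩ | ⟨j, -, rfl⟩)
        · obtain rfl := hV.eq_of_mem hi hj
          exact ⟨hv, hvc, hlt⟩
        · obtain rfl := hV.eq_of_mem hi (g j).root_mem
          exact absurd rfl hvr
  · constructor
    · rintro ⟨h, -⟩
      exact absurd h hv
    · rintro (⟨j, hj, -⟩ | ⟨j, -, rfl⟩)
      exacts [absurd (hV.subset j hj) hv, absurd (hV.subset j (g j).root_mem) hv]

lemma des_glue :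
    (hV.glue c g).des = ∑ i, (g i).des + #{j | (g c).root < (g j).root} := by
  rw [des, hV.desSet_glue, card_union_of_disjoint, card_biUnion,
    card_image_of_injective _ (hV.root_injective g)]
  · rfl
  · exact fun i _ j _ hij => (hV.disjoint i j hij).mono (filter_subset _ _) (filter_subset _ _)
  · refine disjoint_left.2 fun v hv hv' => ?_
    obtain ⟨i, -, hvi⟩ := mem_biUnion.1 hv
    obtain ⟨j, -, rfl⟩ := mem_image.1 hv'
    obtain ⟨hj, hjr, -⟩ := mem_filter.1 hvi
    obtain rfl := hV.eq_of_mem hj (g j).root_mem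
    exact hjr rfl

end Glue

section Sum

variable {G : SimpleGraph ℕ} {S : Finset ℕ} {k : ℕ} {V : Fin k → Finset ℕ}

def bTreeEquiv (hV : IsComponentPartition G S V) :
    Fin k × (∀ i, {T : RTree (V i) | IsBTree (V i) (hatB G (V i)) T}) ≃
      {T : RTree S | IsBTree S (hatB G S) T} where
  toFun p := ⟨hV.glue p.1 fun i => p.2 i, hV.glue_isBTree _ _ fun i => (p.2 i).2⟩
  invFun T := ((hV.exists_mem T.1.root_mem).choose,
    fun i => ⟨hV.split T.2 i, hV.split_isBTree T.2 i⟩)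
  left_inv := by
    rintro ⟨c, g⟩
    refine Prod.ext ?_ (funext fun i => Subtype.ext (hV.split_glue c _ _ i))
    exact hV.eq_of_mem (hV.exists_mem (hV.glue c fun i => (g i).1).root_mem).choose_spec
      (g c).1.root_mem
  right_inv T := Subtype.ext (hV.glue_split _ T.2 (hV.exists_mem T.1.root_mem).choose_spec)

theorem hPoly_hatB (hV : IsComponentPartition G S V) :
    hPoly S (hatB G S) = (∑ m ∈ range k, X ^ m) * ∏ i, hPoly (V i) (hatB G (V i)) := by
  simp only [hPoly_eq_sum]
  rw [← hV.bTreeEquiv.sum_comp, Fintype.sum_prod_type, sum_comm, Fintype.prod_sum, mul_sum]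
  refine Fintype.sum_congr _ _ fun g => ?_
  calc ∑ c, X ^ (hV.glue c fun i => (g i).1).des
      = ∑ c, X ^ (∑ i, (g i).1.des) * X ^ #{j | (g c).1.root < (g j).1.root} := by
        simp only [des_glue, pow_add]
    _ = (∑ m ∈ range k, X ^ m) * ∏ i, X ^ (g i).1.des := by
        rw [← mul_sum, sum_pow_card_filter_lt (hV.root_injective fun i => (g i).1), card_univ,
          Fintype.card_fin, prod_pow_eq_pow_sum, mul_comm]

end Sum

end IsComponentPartition

theorem hPoly_disconnected_graph_general
    (n : ℕ) (G : SimpleGraph ℕ)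
    (k : ℕ) (V : Fin k → Finset ℕ)
    (hdisj : ∀ i j, i ≠ j → Disjoint (V i) (V j))
    (hcover : Finset.univ.biUnion V = Finset.Icc 1 n)
    (hconn : ∀ i, (G.induce ((V i : Finset ℕ) : Set ℕ)).Connected)
    (hsep : ∀ i j, i ≠ j → ∀ x ∈ V i, ∀ y ∈ V j, ¬ G.Adj x y) :
    (∑ᶠ T ∈ {T : RTree (Finset.Icc 1 n) |
        IsBTree (Finset.Icc 1 n) (hatB G (Finset.Icc 1 n)) T},
        (Polynomial.X : Polynomial ℤ) ^ T.des)
      = (∑ i ∈ Finset.range k, (Polynomial.X : Polynomial ℤ) ^ i) *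
        ∏ i : Fin k,
          ∑ᶠ T ∈ {T : RTree (V i) | IsBTree (V i) (hatB G (V i)) T},
            (Polynomial.X : Polynomial ℤ) ^ T.des :=
  (IsComponentPartition.mk hdisj hcover hconn hsep).hPoly_hatB

/-- If the simple graph `G` on `[n]` has connected components
`G₁, …, G_k` (with vertex sets `V 0, …, V (k-1)`), then
`h_G(t) = (1 + t + ⋯ + t^{k−1}) ∏ᵢ h_{Gᵢ}(t)` in `ℤ[t]`, where `h` denotes the
`h`-polynomial of the corresponding connected graphical building set. -/
theorem hPoly_disconnected_graph
    (n : ℕ) (G : SimpleGraph ℕ)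
    (hGS : ∀ x y, G.Adj x y → x ∈ Finset.Icc 1 n ∧ y ∈ Finset.Icc 1 n)
    (k : ℕ) (V : Fin k → Finset ℕ)
    (hdisj : ∀ i j, i ≠ j → Disjoint (V i) (V j))
    (hcover : Finset.univ.biUnion V = Finset.Icc 1 n)
    (hne : ∀ i, (V i).Nonempty)
    (hconn : ∀ i, (G.induce ((V i : Finset ℕ) : Set ℕ)).Connected)
    (hsep : ∀ i j, i ≠ j → ∀ x ∈ V i, ∀ y ∈ V j, ¬ G.Adj x y) :
    (∑ᶠ T ∈ {T : RTree (Finset.Icc 1 n) |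
        IsBTree (Finset.Icc 1 n) (hatB G (Finset.Icc 1 n)) T},
        (Polynomial.X : Polynomial ℤ) ^ T.des)
      = (∑ i ∈ Finset.range k, (Polynomial.X : Polynomial ℤ) ^ i) *
        ∏ i : Fin k,
          ∑ᶠ T ∈ {T : RTree (V i) | IsBTree (V i) (hatB G (V i)) T},
            (Polynomial.X : Polynomial ℤ) ^ T.des :=
  hPoly_disconnected_graph_general n G k V hdisj hcover hconn hsep
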